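/- arXiv:1108.3666 — 2 statements merged into one kernel-verified Lean document; each statement's English description precedes it below -/
import Mathlib

section
/- Let λ = (λ₁,...,λ_h) be a partition of n with λ₁ ≥ 3n/4 and set A = n − λ₁. Then the dimension of the irreducible representation of S_n indexed by λ satisfies χ^λ(1) ≥ (n/(2A))^A; in particular, if A > √n then χ^λ(1) ≥ 2^{√n}. -/
/-- A standard Young tableau of shape `μ` (with `μ.card = n` cells): a semistandard
tableau which is strictly increasing along rows, with entries among `1, ..., n`,
all distinct. -/
def IsStandardYT (μ : YoungDiagram) (T : SemistandardYoungTableau μ) : Prop :=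
  (∀ i j1 j2 : ℕ, j1 < j2 → (i, j2) ∈ μ → T i j1 < T i j2) ∧
  (∀ c ∈ μ.cells, T c.1 c.2 ∈ Finset.Icc 1 μ.card) ∧
  Set.InjOn (fun c : ℕ × ℕ => T c.1 c.2) ↑μ.cells

/-- The number `f^μ` of standard Young tableaux of shape `μ`, i.e. the dimension of the
irreducible representation of `S_n` indexed by `μ`. -/
noncomputable def fSYT (μ : YoungDiagram) : ℕ :=
  Nat.card {T : SemistandardYoungTableau μ // IsStandardYT μ T}

/-! Write `λ₁, λ₂` for the first two row lengths of `μ` and `A = n - λ₁` for the number of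
cells below the first row. Every `A`-subset `S` of `{λ₂ + 1, …, n}` gives a standard tableau:
put `1, …, λ₂` into the first `λ₂` cells of the first row, the elements of `S` increasingly
into the cells below the first row in reading order, and the remaining numbers increasingly
into the rest of the first row. Columns increase because every cell below the first row lies
under one of the first `λ₂` cells. Since `S` is recovered from the tableau,
`f^μ ≥ C(n - λ₂, A) ≥ ((n - λ₂) / A) ^ A ≥ (n / (2A)) ^ A`, the last step by `λ₂ ≤ A ≤ n / 4`. -/

open Finset

namespace Finset

variable {α β : Type*} [LinearOrder α] [LinearOrder β] [Inhabited β]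

noncomputable def orderMatch (s : Finset α) (t : Finset β) (h : #s = #t) (x : α) : β :=
  if hx : x ∈ s then ((s.orderIsoOfFin h).symm.trans (t.orderIsoOfFin rfl) ⟨x, hx⟩ : β)
  else default

variable {s : Finset α} {t : Finset β} (h : #s = #t)

lemma orderMatch_of_mem {x : α} (hx : x ∈ s) :
    orderMatch s t h x = ((s.orderIsoOfFin h).symm.trans (t.orderIsoOfFin rfl) ⟨x, hx⟩ : β) :=
  dif_pos hx

lemma orderMatch_mem {x : α} (hx : x ∈ s) : orderMatch s t h x ∈ t := by
  rw [orderMatch_of_mem h hx]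
  exact Subtype.property _

lemma strictMonoOn_orderMatch : StrictMonoOn (orderMatch s t h) s := by
  intro x hx y hy hxy
  rw [orderMatch_of_mem h hx, orderMatch_of_mem h hy, Subtype.coe_lt_coe, OrderIso.lt_iff_lt]
  exact hxy

lemma image_orderMatch : s.image (orderMatch s t h) = t := by
  refine eq_of_subset_of_card_le (image_subset_iff.mpr fun x hx => orderMatch_mem h hx) ?_
  rw [card_image_of_injOn (strictMonoOn_orderMatch h).injOn, h]

end Finset

lemma div_pow_le_choose {α : Type*} [Field α] [LinearOrder α] [IsStrictOrderedRing α]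
    {n k : ℕ} (hkn : k ≤ n) : ((n : α) / k) ^ k ≤ n.choose k := by
  induction k generalizing n with
  | zero => simp
  | succ k ih =>
    obtain ⟨n, rfl⟩ : ∃ m, n = m + 1 := ⟨n - 1, by omega⟩
    have hpow : (((n + 1 : ℕ) : α) / (k + 1 : ℕ)) ^ k ≤ ((n : α) / k) ^ k := by
      rcases Nat.eq_zero_or_pos k with rfl | hk
      · simp
      refine pow_le_pow_left₀ (by positivity) ?_ k
      rw [div_le_div_iff₀ (by positivity) (by positivity)]
      have : (k : α) ≤ n := by exact_mod_cast (show k ≤ n by omega)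
      push_cast
      linarith
    calc (((n + 1 : ℕ) : α) / (k + 1 : ℕ)) ^ (k + 1)
        = ((n + 1 : ℕ) : α) / (k + 1 : ℕ) * (((n + 1 : ℕ) : α) / (k + 1 : ℕ)) ^ k :=
          pow_succ' _ _
      _ ≤ ((n + 1 : ℕ) : α) / (k + 1 : ℕ) * n.choose k := by
        gcongr
        exact hpow.trans (ih (by omega))
      _ = (n + 1).choose (k + 1) := by
        rw [div_mul_eq_mul_div, div_eq_iff (by positivity)]
        exact_mod_cast (Nat.add_one_mul_choose_eq n k)

namespace YoungDiagram

variable (μ : YoungDiagram)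

lemma rowLen_zero_le_card : μ.rowLen 0 ≤ μ.card := by
  rw [rowLen_eq_card]
  exact card_filter_le _ _

def lowerCells : Finset (ℕ ×ₗ ℕ) := (μ.cells.filter (·.1 ≠ 0)).map toLex.toEmbedding

@[simp]
lemma mem_lowerCells {c : ℕ ×ₗ ℕ} : c ∈ μ.lowerCells ↔ ofLex c ∈ μ ∧ (ofLex c).1 ≠ 0 := by
  rw [lowerCells, ← toLex_ofLex c]
  simp

lemma card_lowerCells : #μ.lowerCells = μ.card - μ.rowLen 0 := by
  have := card_filter_add_card_filter_not (s := μ.cells) (p := fun c => c.1 = 0)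
  rw [lowerCells, card_map, rowLen_eq_card, row]
  simp only [YoungDiagram.card, ne_eq] at this ⊢
  omega

lemma rowLen_one_le_card_sub_rowLen_zero : μ.rowLen 1 ≤ μ.card - μ.rowLen 0 := by
  rw [← card_lowerCells, rowLen_eq_card, lowerCells, card_map, row]
  exact card_le_card (monotone_filter_right _ fun _ _ (hc : _ = 1) => by omega)

section subsetTableau

variable {μ : YoungDiagram} {S : Finset ℕ}

lemma card_lowerCells_eq (hcard : #S = μ.card - μ.rowLen 0) : #μ.lowerCells = #S := by
  rw [card_lowerCells, hcard]

lemma card_Ico_rowLen_eq (hS : S ⊆ Ioc (μ.rowLen 1) μ.card)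
    (hcard : #S = μ.card - μ.rowLen 0) :
    #(Ico (μ.rowLen 1) (μ.rowLen 0)) = #(Ioc (μ.rowLen 1) μ.card \ S) := by
  have := μ.rowLen_zero_le_card
  have := μ.rowLen_anti 0 1 zero_le_one
  rw [card_sdiff_of_subset hS, Nat.card_Ico, Nat.card_Ioc, hcard]
  omega

variable (hS : S ⊆ Ioc (μ.rowLen 1) μ.card) (hcard : #S = μ.card - μ.rowLen 0)

noncomputable def fillingOfSubset (i j : ℕ) : ℕ :=
  if (i, j) ∈ μ then
    if i = 0 then
      if j < μ.rowLen 1 then j + 1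
      else (Ico (μ.rowLen 1) (μ.rowLen 0)).orderMatch (Ioc (μ.rowLen 1) μ.card \ S)
        (card_Ico_rowLen_eq hS hcard) j
    else μ.lowerCells.orderMatch S (card_lowerCells_eq hcard) (toLex (i, j))
  else 0

variable {i j : ℕ}

lemma fillingOfSubset_zero_of_lt (hj : (0, j) ∈ μ) (hj₁ : j < μ.rowLen 1) :
    fillingOfSubset hS hcard 0 j = j + 1 := by
  simp [fillingOfSubset, hj, hj₁]

lemma fillingOfSubset_zero_of_le (hj : (0, j) ∈ μ) (hj₁ : μ.rowLen 1 ≤ j) :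
    fillingOfSubset hS hcard 0 j = (Ico (μ.rowLen 1) (μ.rowLen 0)).orderMatch
      (Ioc (μ.rowLen 1) μ.card \ S) (card_Ico_rowLen_eq hS hcard) j := by
  simp [fillingOfSubset, hj, hj₁.not_gt]

lemma fillingOfSubset_of_ne_zero (hij : (i, j) ∈ μ) (hi : i ≠ 0) :
    fillingOfSubset hS hcard i j =
      μ.lowerCells.orderMatch S (card_lowerCells_eq hcard) (toLex (i, j)) := by
  simp [fillingOfSubset, hij, hi]

lemma fillingOfSubset_mem_of_ne_zero (hij : (i, j) ∈ μ) (hi : i ≠ 0) :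
    fillingOfSubset hS hcard i j ∈ S := by
  rw [fillingOfSubset_of_ne_zero hS hcard hij hi]
  exact orderMatch_mem _ (by simpa using ⟨hij, hi⟩)

lemma fillingOfSubset_zero_mem (hj : (0, j) ∈ μ) :
    fillingOfSubset hS hcard 0 j ∈ Icc 1 μ.card \ S := by
  have hj₀ : j < μ.rowLen 0 := mem_iff_lt_rowLen.mp hj
  have := μ.rowLen_zero_le_card
  rcases lt_or_ge j (μ.rowLen 1) with hj₁ | hj₁
  · rw [fillingOfSubset_zero_of_lt hS hcard hj hj₁, mem_sdiff, mem_Icc]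
    exact ⟨by omega, fun h => by have := mem_Ioc.mp (hS h); omega⟩
  · rw [fillingOfSubset_zero_of_le hS hcard hj hj₁]
    refine sdiff_subset_sdiff (fun x hx => ?_) le_rfl
      (orderMatch_mem _ (mem_Ico.mpr ⟨hj₁, hj₀⟩))
    rw [mem_Ioc] at hx
    exact mem_Icc.mpr ⟨by omega, hx.2⟩

lemma fillingOfSubset_zero_lt_zero {j₁ j₂ : ℕ} (hj : j₁ < j₂) (hj₂ : (0, j₂) ∈ μ) :
    fillingOfSubset hS hcard 0 j₁ < fillingOfSubset hS hcard 0 j₂ := by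
  have hj₁ : (0, j₁) ∈ μ := μ.up_left_mem le_rfl hj.le hj₂
  rcases lt_or_ge j₂ (μ.rowLen 1) with h₂ | h₂
  · rw [fillingOfSubset_zero_of_lt hS hcard hj₁ (hj.trans h₂),
      fillingOfSubset_zero_of_lt hS hcard hj₂ h₂]
    omega
  have htail : μ.rowLen 1 < fillingOfSubset hS hcard 0 j₂ := by
    rw [fillingOfSubset_zero_of_le hS hcard hj₂ h₂]
    have := orderMatch_mem (card_Ico_rowLen_eq hS hcard)
      (mem_Ico.mpr ⟨h₂, mem_iff_lt_rowLen.mp hj₂⟩)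
    exact (mem_Ioc.mp (mem_sdiff.mp this).1).1
  rcases lt_or_ge j₁ (μ.rowLen 1) with h₁ | h₁
  · rw [fillingOfSubset_zero_of_lt hS hcard hj₁ h₁]
    omega
  · rw [fillingOfSubset_zero_of_le hS hcard hj₁ h₁, fillingOfSubset_zero_of_le hS hcard hj₂ h₂]
    exact strictMonoOn_orderMatch _ (mem_Ico.mpr ⟨h₁, mem_iff_lt_rowLen.mp hj₁⟩)
      (mem_Ico.mpr ⟨h₂, mem_iff_lt_rowLen.mp hj₂⟩) hj

lemma fillingOfSubset_lt_of_ne_zero {i₁ j₁ i₂ j₂ : ℕ} (hlt : toLex (i₁, j₁) < toLex (i₂, j₂))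
    (hi₁ : i₁ ≠ 0) (hi₂ : i₂ ≠ 0) (h₁ : (i₁, j₁) ∈ μ) (h₂ : (i₂, j₂) ∈ μ) :
    fillingOfSubset hS hcard i₁ j₁ < fillingOfSubset hS hcard i₂ j₂ := by
  rw [fillingOfSubset_of_ne_zero hS hcard h₁ hi₁, fillingOfSubset_of_ne_zero hS hcard h₂ hi₂]
  exact strictMonoOn_orderMatch _ (by simpa using ⟨h₁, hi₁⟩) (by simpa using ⟨h₂, hi₂⟩) hlt

lemma fillingOfSubset_row_strict {j₁ j₂ : ℕ} (hj : j₁ < j₂) (hj₂ : (i, j₂) ∈ μ) :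
    fillingOfSubset hS hcard i j₁ < fillingOfSubset hS hcard i j₂ := by
  rcases eq_or_ne i 0 with rfl | hi
  · exact fillingOfSubset_zero_lt_zero hS hcard hj hj₂
  · exact fillingOfSubset_lt_of_ne_zero hS hcard
      (Prod.Lex.toLex_lt_toLex.mpr (.inr ⟨rfl, hj⟩)) hi hi (μ.up_left_mem le_rfl hj.le hj₂) hj₂

lemma fillingOfSubset_col_strict {i₁ i₂ : ℕ} (hi : i₁ < i₂) (hi₂ : (i₂, j) ∈ μ) :
    fillingOfSubset hS hcard i₁ j < fillingOfSubset hS hcard i₂ j := by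
  have hi₁ : (i₁, j) ∈ μ := μ.up_left_mem hi.le le_rfl hi₂
  rcases eq_or_ne i₁ 0 with rfl | hi₁₀
  · have hj : j < μ.rowLen 1 := mem_iff_lt_rowLen.mp (μ.up_left_mem (by omega) le_rfl hi₂)
    have := mem_Ioc.mp (hS (fillingOfSubset_mem_of_ne_zero hS hcard hi₂ hi.ne'))
    rw [fillingOfSubset_zero_of_lt hS hcard hi₁ hj]
    omega
  · exact fillingOfSubset_lt_of_ne_zero hS hcard (Prod.Lex.toLex_lt_toLex.mpr (.inl hi))
      hi₁₀ (by omega) hi₁ hi₂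

lemma injOn_fillingOfSubset :
    Set.InjOn (fun c : ℕ × ℕ => fillingOfSubset hS hcard c.1 c.2) μ.cells := by
  have key : ∀ c ∈ μ.cells, ∀ c' ∈ μ.cells, c.1 = 0 → c'.1 ≠ 0 →
      fillingOfSubset hS hcard c.1 c.2 ≠ fillingOfSubset hS hcard c'.1 c'.2 := by
    rintro ⟨i, j⟩ hc ⟨i', j'⟩ hc' (rfl : i = 0) hi' heq
    have := fillingOfSubset_mem_of_ne_zero hS hcard ((mem_cells _).mp hc') hi'
    exact (mem_sdiff.mp (fillingOfSubset_zero_mem hS hcard ((mem_cells _).mp hc))).2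
      (heq ▸ this)
  rintro ⟨i, j⟩ hc ⟨i', j'⟩ hc' heq
  rcases eq_or_ne i 0 with rfl | hi <;> rcases eq_or_ne i' 0 with rfl | hi'
  · simp only at heq
    rcases lt_trichotomy j j' with h | rfl | h
    · exact absurd heq (fillingOfSubset_zero_lt_zero hS hcard h ((mem_cells _).mp hc')).ne
    · rfl
    · exact absurd heq (fillingOfSubset_zero_lt_zero hS hcard h ((mem_cells _).mp hc)).ne'
  · exact absurd heq (key _ hc _ hc' rfl hi')
  · exact absurd heq.symm (key _ hc' _ hc rfl hi)
  · rw [mem_coe, mem_cells] at hc hc'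
    simp only [fillingOfSubset_of_ne_zero hS hcard hc hi,
      fillingOfSubset_of_ne_zero hS hcard hc' hi'] at heq
    exact toLex.injective ((strictMonoOn_orderMatch _).injOn (by simpa using ⟨hc, hi⟩)
      (by simpa using ⟨hc', hi'⟩) heq)

noncomputable def tableauOfSubset : SemistandardYoungTableau μ where
  entry := fillingOfSubset hS hcard
  row_weak' hj hj₂ := (fillingOfSubset_row_strict hS hcard hj hj₂).le
  col_strict' hi hi₂ := fillingOfSubset_col_strict hS hcard hi hi₂
  zeros' h := if_neg h

lemma isStandardYT_tableauOfSubset : IsStandardYT μ (tableauOfSubset hS hcard) := by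
  refine ⟨fun i j₁ j₂ => fillingOfSubset_row_strict hS hcard, fun ⟨i, j⟩ hc => ?_,
    injOn_fillingOfSubset hS hcard⟩
  rw [mem_cells] at hc
  change fillingOfSubset hS hcard i j ∈ Icc 1 μ.card
  rcases eq_or_ne i 0 with rfl | hi
  · exact (mem_sdiff.mp (fillingOfSubset_zero_mem hS hcard hc)).1
  · have := mem_Ioc.mp (hS (fillingOfSubset_mem_of_ne_zero hS hcard hc hi))
    exact mem_Icc.mpr ⟨by omega, this.2⟩

lemma image_lowerCells_tableauOfSubset :
    μ.lowerCells.image (fun c => tableauOfSubset hS hcard (ofLex c).1 (ofLex c).2) = S := by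
  refine (image_congr fun c hc => ?_).trans (image_orderMatch (card_lowerCells_eq hcard))
  obtain ⟨hc, hc₀⟩ := (mem_lowerCells μ).mp hc
  exact fillingOfSubset_of_ne_zero hS hcard hc hc₀

end subsetTableau

lemma finite_isStandardYT : Finite {T : SemistandardYoungTableau μ // IsStandardYT μ T} := by
  let restrict (T : {T : SemistandardYoungTableau μ // IsStandardYT μ T}) (c : μ.cells) :
      Icc 1 μ.card := ⟨T.1 c.1.1 c.1.2, T.2.2.1 c.1 c.2⟩
  refine Finite.of_injective restrict fun T T' h =>
    Subtype.ext (SemistandardYoungTableau.ext fun i j => ?_)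
  by_cases hc : (i, j) ∈ μ
  · exact congrArg Subtype.val (congrFun h ⟨(i, j), (mem_cells _).mpr hc⟩)
  · rw [T.1.zeros hc, T'.1.zeros hc]

theorem choose_le_fSYT : (μ.card - μ.rowLen 1).choose (μ.card - μ.rowLen 0) ≤ fSYT μ := by
  have := finite_isStandardYT μ
  let P := (Ioc (μ.rowLen 1) μ.card).powersetCard (μ.card - μ.rowLen 0)
  have hP (S : P) : S.1 ⊆ Ioc (μ.rowLen 1) μ.card ∧ #S.1 = μ.card - μ.rowLen 0 :=
    mem_powersetCard.mp S.2
  let tableau (S : P) : {T : SemistandardYoungTableau μ // IsStandardYT μ T} :=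
    ⟨tableauOfSubset (hP S).1 (hP S).2, isStandardYT_tableauOfSubset (hP S).1 (hP S).2⟩
  have htableau : Function.Injective tableau := fun S S' h => Subtype.ext <| by
    rw [← image_lowerCells_tableauOfSubset (hP S).1 (hP S).2,
      ← image_lowerCells_tableauOfSubset (hP S').1 (hP S').2]
    simp only [tableau, Subtype.mk.injEq] at h
    simp only [h]
  calc (μ.card - μ.rowLen 1).choose (μ.card - μ.rowLen 0) = #P := by
        rw [card_powersetCard, Nat.card_Ioc]
    _ = Nat.card P := (Nat.card_eq_finsetCard P).symm
    _ ≤ fSYT μ := Nat.card_le_card_of_injective tableau htableau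

end YoungDiagram

/-- If `λ` is a partition of `n` with `λ₁ ≥ 3n/4` and `A = n − λ₁`, then the dimension
of the irreducible representation of `S_n` indexed by `λ` satisfies
`χ^λ(1) ≥ (n/(2A))^A`; in particular if `A > √n` then `χ^λ(1) ≥ 2^√n`. -/
theorem stmt_10 (n : ℕ) (μ : YoungDiagram) (hcard : μ.card = n)
    (hrow : 3 * n ≤ 4 * μ.rowLen 0) :
    ((n : ℝ) / (2 * (n - μ.rowLen 0 : ℕ))) ^ (n - μ.rowLen 0 : ℕ) ≤ (fSYT μ : ℝ) ∧
    (Real.sqrt n < (n - μ.rowLen 0 : ℕ) → (2 : ℝ) ^ (Real.sqrt n) ≤ (fSYT μ : ℝ)) := by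
  subst hcard
  set A := μ.card - μ.rowLen 0
  have hA : 4 * A ≤ μ.card := by have := μ.rowLen_zero_le_card; omega
  have hrowLen_one := μ.rowLen_one_le_card_sub_rowLen_zero
  have hbound : ((μ.card : ℝ) / (2 * A)) ^ A ≤ fSYT μ := calc
    _ ≤ (((μ.card - μ.rowLen 1 : ℕ) : ℝ) / A) ^ A := by
      rw [div_mul_eq_div_div]
      gcongr
      rw [div_le_iff₀ two_pos]
      exact_mod_cast (by omega : μ.card ≤ (μ.card - μ.rowLen 1) * 2)
    _ ≤ (μ.card - μ.rowLen 1).choose A := div_pow_le_choose (by omega)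
    _ ≤ fSYT μ := by exact_mod_cast μ.choose_le_fSYT
  refine ⟨hbound, fun hsqrt => ?_⟩
  have hApos : 0 < A := by exact_mod_cast (Real.sqrt_nonneg _).trans_lt hsqrt
  have htwo : (2 : ℝ) ≤ μ.card / (2 * A) := by
    rw [le_div_iff₀ (by positivity)]
    exact_mod_cast (by omega : 2 * (2 * A) ≤ μ.card)
  calc (2 : ℝ) ^ √(μ.card : ℝ) ≤ 2 ^ (A : ℝ) :=
        Real.rpow_le_rpow_of_exponent_le one_le_two hsqrt.le
    _ = 2 ^ A := Real.rpow_natCast 2 A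
    _ ≤ (μ.card / (2 * A)) ^ A := pow_le_pow_left₀ zero_le_two htwo A
    _ ≤ fSYT μ := hbound
end

section
/- Let σ = ((13)(24); σ_a, σ_b, σ_a⁻¹, σ_b⁻¹) and τ = ((1234); id, id, id, id) in the wreath product C₄≀S_n, acting on {1,2,3,4} × {1,...,n} via (h;f)·(i,j) = (h(i), f(h(i))(j)). Then the number of orbits of the cyclic group ⟨στ⟩ on {1,2,3,4} × {1,...,n} equals the number of cycles of the commutator-type product π' = π₁∘π₂∘π₃∘π₄ ∈ S_n, where στ = ((1432); π₁, π₂, π₃, π₄). -/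
open scoped Classical in
/-- The number of cycles of a permutation, including fixed points. -/
noncomputable def numCycles {n : ℕ} (σ : Equiv.Perm (Fin n)) : ℕ :=
  Multiset.card σ.cycleType + (Finset.univ.filter fun x => σ x = x).card

/-- The permutation of `[4] × [n]` given by the element
`στ = ((1432); π₁, π₂, π₃, π₄) = ((1432); σ_a, σ_b, σ_a⁻¹, σ_b⁻¹)` of the wreath
product `C₄ ≀ S_n`, acting by `(h;f)·(i,j) = (h i, f (h i) j)`.  Here the `4`-cycle
`(1432)` is realized (0-indexed) as `(finRotate 4)⁻¹`. -/
def sigmaTau {n : ℕ} (σa σb : Equiv.Perm (Fin n)) : Equiv.Perm (Fin 4 × Fin n) where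
  toFun p := ((finRotate 4)⁻¹ p.1, ![σa, σb, σa⁻¹, σb⁻¹] ((finRotate 4)⁻¹ p.1) p.2)
  invFun q := (finRotate 4 q.1, (![σa, σb, σa⁻¹, σb⁻¹] q.1)⁻¹ q.2)
  left_inv p := by simp
  right_inv q := by simp [-finRotate_succ_apply]

/-!
The element `στ` moves the first coordinate by the `4`-cycle `(1432)`, so every `⟨στ⟩`-orbit
meets the fibre `{1} × [n]`, and a point of that fibre comes back to it exactly after multiples
of `4` steps. On the fibre, `(στ)⁴` acts as `π' = σ_a σ_b σ_a⁻¹ σ_b⁻¹`, so the orbits of `στ`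
correspond to those of this first-return map, that is, to the cycles of `π'`.
-/

open Equiv Equiv.Perm MulAction Function

theorem Function.Semiconj.perm_zpow {X Y : Type*} {e : X → Y} {u : Perm X} {v : Perm Y}
    (h : Semiconj e u v) (m : ℤ) : Semiconj e ⇑(u ^ m) ⇑(v ^ m) := by
  induction m using Int.induction_on with
  | zero => exact Semiconj.id_right
  | succ m ih => rw [zpow_add_one, zpow_add_one, coe_mul, coe_mul]; exact ih.comp_right h
  | pred m ih =>
    rw [zpow_sub_one, zpow_sub_one, coe_mul, coe_mul]
    exact ih.comp_right (h.inverses_right u.apply_symm_apply v.symm_apply_apply)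

namespace Equiv.Perm

section Orbits

variable {α : Type*}

theorem orbitRel_zpowers_iff (σ : Perm α) {x y : α} :
    orbitRel (Subgroup.zpowers σ) α x y ↔ σ.SameCycle x y := by
  rw [orbitRel_apply, mem_orbit_iff, sameCycle_comm]
  constructor
  · rintro ⟨⟨_, m, rfl⟩, h⟩
    exact ⟨m, h⟩
  · rintro ⟨m, h⟩
    exact ⟨⟨σ ^ m, m, rfl⟩, h⟩

variable [Fintype α] [DecidableEq α]

def cycleOrFixedPoint (σ : Perm α) (x : α) : σ.cycleFactorsFinset ⊕ fixedPoints σ :=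
  if h : σ x = x then .inr ⟨x, h⟩
  else .inl ⟨σ.cycleOf x, cycleOf_mem_cycleFactorsFinset_iff.2 (mem_support.2 h)⟩

theorem cycleOrFixedPoint_eq_iff (σ : Perm α) {x y : α} :
    σ.cycleOrFixedPoint x = σ.cycleOrFixedPoint y ↔ σ.SameCycle x y := by
  by_cases hx : σ x = x <;> by_cases hy : σ y = y <;>
    simp only [cycleOrFixedPoint, hx, hy, dite_true, dite_false, reduceCtorEq, false_iff,
      Sum.inl.injEq, Sum.inr.injEq]
  · exact ⟨fun h => by cases h; exact SameCycle.refl _ _, fun h => Subtype.ext (h.eq_of_left hx)⟩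
  · exact fun h => hy (h.apply_eq_self_iff.1 hx)
  · exact fun h => hx (h.apply_eq_self_iff.2 hy)
  · refine ⟨fun h => ?_, fun h => Subtype.ext h.cycleOf_eq⟩
    have hxy : σ.cycleOf x = σ.cycleOf y := congrArg Subtype.val h
    have hy' : y ∈ (σ.cycleOf x).support := by
      rw [hxy, mem_support_cycleOf_iff]
      exact ⟨SameCycle.refl _ _, mem_support.2 hy⟩
    exact (mem_support_cycleOf_iff.1 hy').1

theorem cycleOrFixedPoint_surjective (σ : Perm α) : Surjective σ.cycleOrFixedPoint := by
  rintro (⟨c, hc⟩ | ⟨x, hx⟩)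
  · obtain ⟨x, hx⟩ := (mem_cycleFactorsFinset_iff.1 hc).1.nonempty_support
    have hσx : σ x ≠ x := mem_support.1 (mem_cycleFactorsFinset_support_le hc hx)
    refine ⟨x, ?_⟩
    simp only [cycleOrFixedPoint, hσx, dite_false, (cycle_is_cycleOf hx hc).symm]
  · exact ⟨x, dif_pos hx⟩

theorem nat_card_orbitRel_zpowers (σ : Perm α) :
    Nat.card (orbitRel.Quotient (Subgroup.zpowers σ) α) =
      Multiset.card σ.cycleType + Nat.card (fixedPoints σ) := by
  have hker : orbitRel (Subgroup.zpowers σ) α = Setoid.ker σ.cycleOrFixedPoint :=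
    Setoid.ext fun x y => (orbitRel_zpowers_iff σ).trans (cycleOrFixedPoint_eq_iff σ).symm
  rw [orbitRel.Quotient, hker,
    Nat.card_congr (Setoid.quotientKerEquivOfSurjective _ σ.cycleOrFixedPoint_surjective),
    Nat.card_sum, cycleType_def, Multiset.card_map, Nat.card_eq_fintype_card, Fintype.card_coe]
  rfl

theorem nat_card_orbitRel_zpowers_eq_numCycles {n : ℕ} (σ : Perm (Fin n)) :
    Nat.card (orbitRel.Quotient (Subgroup.zpowers σ) (Fin n)) = numCycles σ := by
  classical
  rw [nat_card_orbitRel_zpowers, numCycles, Nat.card_eq_fintype_card, Fintype.card_ofFinset]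
  rfl

end Orbits

section SkewProduct

variable {I Y : Type*} {T : Perm (I × Y)} {ρ : Perm I} {c : Perm Y} {i₀ : I}

theorem orderOf_dvd_of_zpow_apply_eq_self (hρ : ∀ i, ρ.SameCycle i₀ i) {m : ℤ}
    (hm : (ρ ^ m) i₀ = i₀) : (orderOf ρ : ℤ) ∣ m := by
  refine orderOf_dvd_iff_zpow_eq_one.2 (Equiv.ext fun i => ?_)
  obtain ⟨j, rfl⟩ := hρ i
  rw [← mul_apply, ← zpow_add, add_comm, zpow_add, mul_apply, hm, one_apply]

theorem exists_sameCycle_mk (hT : Semiconj Prod.fst T ρ) (hρ : ∀ i, ρ.SameCycle i₀ i)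
    (p : I × Y) : ∃ y, T.SameCycle (i₀, y) p := by
  obtain ⟨m, hm⟩ := hρ p.1
  have hfst : ((T ^ (-m)) p).1 = i₀ := by
    rw [hT.perm_zpow (-m) p, ← hm, ← mul_apply, ← zpow_add, neg_add_cancel, zpow_zero, one_apply]
  refine ⟨((T ^ (-m)) p).2, m, ?_⟩
  rw [← hfst, ← mul_apply, ← zpow_add, add_neg_cancel, zpow_zero, one_apply]

theorem sameCycle_mk_iff (hT : Semiconj Prod.fst T ρ) (hρ : ∀ i, ρ.SameCycle i₀ i)
    (hc : Semiconj (Prod.mk i₀) c ⇑(T ^ orderOf ρ)) {y y' : Y} :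
    T.SameCycle (i₀, y) (i₀, y') ↔ c.SameCycle y y' := by
  have hreturn : ∀ q : ℤ, (T ^ (orderOf ρ * q)) (i₀, y) = (i₀, (c ^ q) y) := fun q => by
    rw [zpow_mul, zpow_natCast]
    exact (hc.perm_zpow q y).symm
  constructor
  · rintro ⟨m, hm⟩
    have hfix : (ρ ^ m) i₀ = i₀ := by
      simpa only [hm] using (hT.perm_zpow m (i₀, y)).symm
    obtain ⟨q, rfl⟩ := orderOf_dvd_of_zpow_apply_eq_self hρ hfix
    rw [hreturn] at hm
    exact ⟨q, (Prod.mk.inj hm).2⟩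
  · rintro ⟨q, rfl⟩
    exact ⟨orderOf ρ * q, hreturn q⟩

theorem nat_card_orbitRel_zpowers_eq_of_semiconj (hT : Semiconj Prod.fst T ρ)
    (hρ : ∀ i, ρ.SameCycle i₀ i) (hc : Semiconj (Prod.mk i₀) c ⇑(T ^ orderOf ρ)) :
    Nat.card (orbitRel.Quotient (Subgroup.zpowers T) (I × Y)) =
      Nat.card (orbitRel.Quotient (Subgroup.zpowers c) Y) := by
  refine (Nat.card_eq_of_bijective (Quotient.map' (Prod.mk i₀) fun y y' h => ?_) ⟨?_, ?_⟩).symm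
  · exact (orbitRel_zpowers_iff T).2 ((sameCycle_mk_iff hT hρ hc).2 ((orbitRel_zpowers_iff c).1 h))
  · rintro ⟨y⟩ ⟨y'⟩ h
    refine Quotient.sound ((orbitRel_zpowers_iff c).2 ((sameCycle_mk_iff hT hρ hc).1 ?_))
    exact (orbitRel_zpowers_iff T).1 (Quotient.exact h)
  · rintro ⟨p⟩
    obtain ⟨y, hy⟩ := exists_sameCycle_mk hT hρ p
    exact ⟨Quotient.mk'' y, Quotient.sound ((orbitRel_zpowers_iff T).2 hy)⟩

end SkewProduct

end Equiv.Perm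

theorem sigmaTau_pow_four {n : ℕ} (σa σb : Perm (Fin n)) (j : Fin n) :
    (sigmaTau σa σb ^ 4) (0, j) = (0, (σa * σb * σa⁻¹ * σb⁻¹) j) := by
  -- `simp` evaluates `finRotate 4` on numerals, but not its inverse
  have hrot : ((finRotate 4)⁻¹ : Perm (Fin 4)) = finRotate 4 ^ 3 := by decide
  simp [pow_succ, sigmaTau, hrot]

/-- The number of orbits of the cyclic group `⟨στ⟩` on `[4] × [n]` equals the number
of cycles of `π' = π₁ ∘ π₂ ∘ π₃ ∘ π₄ = σ_a σ_b σ_a⁻¹ σ_b⁻¹ ∈ S_n`. -/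
theorem stmt_17 (n : ℕ) (σa σb : Equiv.Perm (Fin n)) :
    Nat.card (MulAction.orbitRel.Quotient (Subgroup.zpowers (sigmaTau σa σb))
        (Fin 4 × Fin n)) =
      numCycles (σa * σb * σa⁻¹ * σb⁻¹) := by
  set ρ : Perm (Fin 4) := (finRotate 4)⁻¹
  have hρ : ρ.IsCycle := (isCycle_finRotate_of_le (by norm_num)).inv
  have htrans : ∀ i, ρ.SameCycle 0 i := fun i => hρ.sameCycle (by decide) (by revert i; decide)
  have horder : orderOf ρ = 4 := by
    rw [hρ.orderOf, Perm.support_inv, support_finRotate]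
    rfl
  rw [← nat_card_orbitRel_zpowers_eq_numCycles]
  refine nat_card_orbitRel_zpowers_eq_of_semiconj (fun _ => rfl) htrans ?_
  rw [horder]
  exact fun j => (sigmaTau_pow_four σa σb j).symm
end
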